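/- arXiv:1708.01466 — 2 statements merged into one kernel-verified Lean document; each statement's English description precedes it below -/
import Mathlib

section
/- The expectation (over x₀ and n) of the ridge cost at the minimizer is an affine (linear with no constant term) function of the pair (σ_x², σ_n²): E[‖y − W x̂‖₂² + λ‖x̂‖₂²] = a(W,λ) σ_x² + b(W,λ) σ_n² for some coefficients depending only on W and λ, namely a = λ Tr(W W^T (W W^T + λ I_M)^{-1}) and b = λ Tr((W W^T + λ I_M)^{-1}). -/
open Matrix MeasureTheory ProbabilityTheory

/-!
Write `T = W Wᵀ + λ I`. The push-through identity `(Wᵀ W + λ I)⁻¹ Wᵀ = Wᵀ T⁻¹` gives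
`x̂ = Wᵀ u` with `u = T⁻¹ y`, so the residual is `y - W Wᵀ u = λ u` and the cost collapses to
`λ u ⬝ᵥ (λ u + W Wᵀ u) = λ yᵀ T⁻¹ y`. Its expectation is `λ tr (T⁻¹ E[y yᵀ])`, and independence
with zero means gives `E[y yᵀ] = σx² W Wᵀ + σn² I`.
-/

section Ridge

variable {m k : Type*} [Fintype m] [Fintype k] [DecidableEq m] (W : Matrix m k ℝ) {lam : ℝ}

theorem isUnit_det_mul_transpose_add_smul_one (hlam : 0 < lam) :
    IsUnit (W * Wᵀ + lam • (1 : Matrix m m ℝ)).det := by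
  have hWW : (W * Wᵀ).PosSemidef := by
    simpa using posSemidef_self_mul_conjTranspose W
  exact (PosDef.posSemidef_add hWW (PosDef.one.smul hlam)).det_pos.ne'.isUnit

theorem inv_transpose_mul_add_smul_one_mul_transpose [DecidableEq k] (hlam : 0 < lam) :
    (Wᵀ * W + lam • (1 : Matrix k k ℝ))⁻¹ * Wᵀ = Wᵀ * (W * Wᵀ + lam • (1 : Matrix m m ℝ))⁻¹ := by
  set S := Wᵀ * W + lam • (1 : Matrix k k ℝ)
  set T := W * Wᵀ + lam • (1 : Matrix m m ℝ)
  have hS : IsUnit S.det := by simpa using isUnit_det_mul_transpose_add_smul_one Wᵀ hlam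
  have hT : IsUnit T.det := isUnit_det_mul_transpose_add_smul_one W hlam
  have hcomm : Wᵀ * T = S * Wᵀ := by
    simp only [S, T, Matrix.mul_add, Matrix.add_mul, Matrix.mul_smul, Matrix.smul_mul,
      Matrix.mul_one, Matrix.one_mul, Matrix.mul_assoc]
  calc S⁻¹ * Wᵀ = S⁻¹ * (Wᵀ * T * T⁻¹) := by rw [mul_nonsing_inv_cancel_right _ _ hT]
    _ = S⁻¹ * (S * (Wᵀ * T⁻¹)) := by rw [hcomm, Matrix.mul_assoc]
    _ = Wᵀ * T⁻¹ := nonsing_inv_mul_cancel_left _ _ hS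

theorem ridge_cost_eq {u v : m → ℝ} (h : (W * Wᵀ + lam • (1 : Matrix m m ℝ)) *ᵥ u = v) :
    (v - W *ᵥ (Wᵀ *ᵥ u)) ⬝ᵥ (v - W *ᵥ (Wᵀ *ᵥ u)) + lam * ((Wᵀ *ᵥ u) ⬝ᵥ (Wᵀ *ᵥ u))
      = lam * (v ⬝ᵥ u) := by
  have hv : lam • u + W *ᵥ (Wᵀ *ᵥ u) = v := by
    rwa [add_mulVec, smul_mulVec, one_mulVec, ← mulVec_mulVec, add_comm] at h
  have hres : v - W *ᵥ (Wᵀ *ᵥ u) = lam • u := by rw [← hv, add_sub_cancel_right]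
  have hWu : (Wᵀ *ᵥ u) ⬝ᵥ (Wᵀ *ᵥ u) = u ⬝ᵥ W *ᵥ (Wᵀ *ᵥ u) := by
    rw [dotProduct_mulVec u, ← mulVec_transpose]
  rw [hres, hWu, dotProduct_comm v u, ← hv]
  simp only [smul_dotProduct, dotProduct_smul, dotProduct_add, smul_eq_mul]
  ring

end Ridge

section CrossMoment

variable {Ω : Type*} [MeasurableSpace Ω] {μ : Measure Ω} {ι κ : Type*}

noncomputable def crossMoment (μ : Measure Ω) (u : Ω → ι → ℝ) (v : Ω → κ → ℝ) : Matrix ι κ ℝ :=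
  of fun i j => ∫ ω, u ω i * v ω j ∂μ

theorem crossMoment_transpose (u : Ω → ι → ℝ) (v : Ω → κ → ℝ) :
    (crossMoment μ u v)ᵀ = crossMoment μ v u := by
  ext i j
  simp only [crossMoment, transpose_apply, of_apply, mul_comm]

theorem memLp_mulVec_apply [Fintype ι] {p : ENNReal} {u : Ω → ι → ℝ}
    (hu : ∀ i, MemLp (fun ω => u ω i) p μ) (A : Matrix κ ι ℝ) (j : κ) :
    MemLp (fun ω => (A *ᵥ u ω) j) p μ :=
  memLp_finsetSum _ fun i _ => (hu i).const_mul (A j i)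

theorem crossMoment_add_left {u u' : Ω → ι → ℝ} {v : Ω → κ → ℝ}
    (hu : ∀ i, MemLp (fun ω => u ω i) 2 μ) (hu' : ∀ i, MemLp (fun ω => u' ω i) 2 μ)
    (hv : ∀ j, MemLp (fun ω => v ω j) 2 μ) :
    crossMoment μ (fun ω => u ω + u' ω) v = crossMoment μ u v + crossMoment μ u' v := by
  ext i j
  simp only [crossMoment, of_apply, Matrix.add_apply, Pi.add_apply, add_mul]
  exact integral_add ((hu i).integrable_mul (hv j)) ((hu' i).integrable_mul (hv j))

theorem crossMoment_add_right {u : Ω → ι → ℝ} {v v' : Ω → κ → ℝ}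
    (hu : ∀ i, MemLp (fun ω => u ω i) 2 μ) (hv : ∀ j, MemLp (fun ω => v ω j) 2 μ)
    (hv' : ∀ j, MemLp (fun ω => v' ω j) 2 μ) :
    crossMoment μ u (fun ω => v ω + v' ω) = crossMoment μ u v + crossMoment μ u v' := by
  rw [← transpose_inj, transpose_add, crossMoment_transpose, crossMoment_transpose,
    crossMoment_transpose, crossMoment_add_left hv hv' hu]

theorem crossMoment_mulVec_left [Fintype ι] {ι' : Type*} {u : Ω → ι → ℝ} {v : Ω → κ → ℝ}
    (hu : ∀ i, MemLp (fun ω => u ω i) 2 μ) (hv : ∀ j, MemLp (fun ω => v ω j) 2 μ)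
    (A : Matrix ι' ι ℝ) :
    crossMoment μ (fun ω => A *ᵥ u ω) v = A * crossMoment μ u v := by
  ext i j
  simp only [crossMoment, of_apply, mul_apply, mulVec, dotProduct, Finset.sum_mul, mul_assoc]
  rw [integral_finsetSum _ fun l _ => ?_]
  · simp only [integral_const_mul]
  · exact ((hu l).integrable_mul (hv j)).const_mul (A i l)

theorem crossMoment_mulVec_right [Fintype κ] {κ' : Type*} {u : Ω → ι → ℝ} {v : Ω → κ → ℝ}
    (hu : ∀ i, MemLp (fun ω => u ω i) 2 μ) (hv : ∀ j, MemLp (fun ω => v ω j) 2 μ)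
    (B : Matrix κ' κ ℝ) :
    crossMoment μ u (fun ω => B *ᵥ v ω) = crossMoment μ u v * Bᵀ := by
  rw [← transpose_inj, transpose_mul, transpose_transpose, crossMoment_transpose,
    crossMoment_transpose, crossMoment_mulVec_left hv hu]

theorem crossMoment_eq_zero_of_indepFun {u : Ω → ι → ℝ} {v : Ω → κ → ℝ} (huv : IndepFun u v μ)
    (hu : ∀ i, AEStronglyMeasurable (fun ω => u ω i) μ)
    (hv : ∀ j, AEStronglyMeasurable (fun ω => v ω j) μ) (hu0 : ∀ i, ∫ ω, u ω i ∂μ = 0) :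
    crossMoment μ u v = 0 := by
  ext i j
  have hij : IndepFun (fun ω => u ω i) (fun ω => v ω j) μ :=
    huv.comp (measurable_pi_apply i) (measurable_pi_apply j)
  simpa [crossMoment, hu0 i] using hij.integral_mul_eq_mul_integral (hu i) (hv j)

theorem crossMoment_self_eq_smul_one [DecidableEq ι] {u : Ω → ι → ℝ} {σ2 : ℝ}
    (hind : Pairwise fun i j => IndepFun (fun ω => u ω i) (fun ω => u ω j) μ)
    (hu : ∀ i, AEStronglyMeasurable (fun ω => u ω i) μ) (hu0 : ∀ i, ∫ ω, u ω i ∂μ = 0)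
    (hvar : ∀ i, ∫ ω, (u ω i) ^ 2 ∂μ = σ2) :
    crossMoment μ u u = σ2 • 1 := by
  ext i j
  rcases eq_or_ne i j with rfl | hij
  · simpa [crossMoment, sq] using hvar i
  · simpa [crossMoment, hij, hu0 i] using (hind hij).integral_mul_eq_mul_integral (hu i) (hu j)

theorem integral_dotProduct_mulVec [Fintype ι] [Fintype κ] {u : Ω → ι → ℝ} {v : Ω → κ → ℝ}
    (hu : ∀ i, MemLp (fun ω => u ω i) 2 μ) (hv : ∀ j, MemLp (fun ω => v ω j) 2 μ)
    (A : Matrix ι κ ℝ) :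
    ∫ ω, u ω ⬝ᵥ A *ᵥ v ω ∂μ = (A * crossMoment μ v u).trace := by
  have hint : ∀ i j, Integrable (fun ω => A i j * (v ω j * u ω i)) μ :=
    fun i j => ((hv j).integrable_mul (hu i)).const_mul (A i j)
  have hexp : ∀ ω, u ω ⬝ᵥ A *ᵥ v ω = ∑ i, ∑ j, A i j * (v ω j * u ω i) := fun ω => by
    simp only [dotProduct, mulVec, Finset.mul_sum]
    exact Finset.sum_congr rfl fun i _ => Finset.sum_congr rfl fun j _ => by ring
  simp only [hexp, trace, diag, mul_apply, crossMoment, of_apply]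
  rw [integral_finsetSum _ fun i _ => integrable_finsetSum _ fun j _ => hint i j]
  refine Finset.sum_congr rfl fun i _ => ?_
  rw [integral_finsetSum _ fun j _ => hint i j]
  simp only [integral_const_mul]

theorem crossMoment_mulVec_add_self [Fintype ι] {ι' : Type*} {x : Ω → ι → ℝ} {n : Ω → ι' → ℝ}
    (hx : ∀ i, MemLp (fun ω => x ω i) 2 μ) (hn : ∀ i, MemLp (fun ω => n ω i) 2 μ)
    (hxn : IndepFun x n μ) (hx0 : ∀ i, ∫ ω, x ω i ∂μ = 0) (W : Matrix ι' ι ℝ) :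
    crossMoment μ (fun ω => W *ᵥ x ω + n ω) (fun ω => W *ᵥ x ω + n ω)
      = W * crossMoment μ x x * Wᵀ + crossMoment μ n n := by
  have hWx := memLp_mulVec_apply hx W
  have hWxn : ∀ i, MemLp (fun ω => (W *ᵥ x ω + n ω) i) 2 μ := fun i => (hWx i).add (hn i)
  have hzero : crossMoment μ x n = 0 :=
    crossMoment_eq_zero_of_indepFun hxn (fun i => (hx i).1) (fun i => (hn i).1) hx0
  rw [crossMoment_add_left hWx hn hWxn, crossMoment_add_right hWx hWx hn,
    crossMoment_add_right hn hWx hn, crossMoment_mulVec_left hx hWx, crossMoment_mulVec_right hx hx,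
    crossMoment_mulVec_left hx hn, crossMoment_mulVec_right hn hx, ← crossMoment_transpose x n,
    hzero]
  simp [Matrix.mul_assoc]

end CrossMoment

theorem stmt_6_general {Ω : Type*} [MeasurableSpace Ω] (μ : Measure Ω)
    {M K : ℕ} (W : Matrix (Fin M) (Fin K) ℝ)
    (x₀ : Ω → Fin K → ℝ) (n : Ω → Fin M → ℝ)
    (σx2 σn2 : ℝ)
    -- entries of x₀ are i.i.d. with mean 0 and variance σx2
    (hx_indep : iIndepFun (fun i ω => x₀ ω i) μ)
    (hx_L2 : ∀ i : Fin K, MemLp (fun ω => x₀ ω i) 2 μ)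
    (hx_mean : ∀ i : Fin K, ∫ ω, x₀ ω i ∂μ = 0)
    (hx_var : ∀ i : Fin K, ∫ ω, (x₀ ω i) ^ 2 ∂μ = σx2)
    -- entries of n are i.i.d. with mean 0 and variance σn2
    (hn_indep : iIndepFun (fun i ω => n ω i) μ)
    (hn_L2 : ∀ i : Fin M, MemLp (fun ω => n ω i) 2 μ)
    (hn_mean : ∀ i : Fin M, ∫ ω, n ω i ∂μ = 0)
    (hn_var : ∀ i : Fin M, ∫ ω, (n ω i) ^ 2 ∂μ = σn2)
    -- x₀ and n are independent
    (hxn : IndepFun x₀ n μ)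
    (lam : ℝ) (hlam : 0 < lam)
    (y : Ω → Fin M → ℝ) (hy : y = fun ω => W.mulVec (x₀ ω) + n ω)
    (xhat : Ω → Fin K → ℝ)
    (hxhat : xhat = fun ω =>
      ((Wᵀ * W + lam • (1 : Matrix (Fin K) (Fin K) ℝ))⁻¹ * Wᵀ).mulVec (y ω)) :
    ∃ a b : ℝ,
      a = lam * (W * Wᵀ * (W * Wᵀ + lam • (1 : Matrix (Fin M) (Fin M) ℝ))⁻¹).trace ∧
      b = lam * ((W * Wᵀ + lam • (1 : Matrix (Fin M) (Fin M) ℝ))⁻¹).trace ∧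
      ∫ ω, ((y ω - W.mulVec (xhat ω)) ⬝ᵥ (y ω - W.mulVec (xhat ω))
          + lam * (xhat ω ⬝ᵥ xhat ω)) ∂μ = a * σx2 + b * σn2 := by
  set T := W * Wᵀ + lam • (1 : Matrix (Fin M) (Fin M) ℝ)
  refine ⟨_, _, rfl, rfl, ?_⟩
  have hy_L2 : ∀ i, MemLp (fun ω => y ω i) 2 μ := by
    subst hy
    exact fun i => (memLp_mulVec_apply hx_L2 W i).add (hn_L2 i)
  have hy_moment : crossMoment μ y y = σx2 • (W * Wᵀ) + σn2 • 1 := by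
    rw [hy, crossMoment_mulVec_add_self hx_L2 hn_L2 hxn hx_mean,
      crossMoment_self_eq_smul_one (fun i j hij => hx_indep.indepFun hij)
        (fun i => (hx_L2 i).1) hx_mean hx_var,
      crossMoment_self_eq_smul_one (fun i j hij => hn_indep.indepFun hij)
        (fun i => (hn_L2 i).1) hn_mean hn_var]
    simp
  have hcost : ∀ ω, (y ω - W *ᵥ xhat ω) ⬝ᵥ (y ω - W *ᵥ xhat ω) + lam * (xhat ω ⬝ᵥ xhat ω)
      = lam * (y ω ⬝ᵥ T⁻¹ *ᵥ y ω) := fun ω => by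
    simp only [hxhat, inv_transpose_mul_add_smul_one_mul_transpose W hlam, ← mulVec_mulVec]
    refine ridge_cost_eq W ?_
    rw [mulVec_mulVec, mul_nonsing_inv _ (isUnit_det_mul_transpose_add_smul_one W hlam),
      one_mulVec]
  simp only [hcost]
  rw [integral_const_mul, integral_dotProduct_mulVec hy_L2 hy_L2, hy_moment, Matrix.mul_add,
    trace_add, Matrix.mul_smul, Matrix.mul_smul, trace_smul, trace_smul, trace_mul_comm T⁻¹,
    Matrix.mul_one]
  simp only [smul_eq_mul]
  ring

theorem stmt_6 {Ω : Type*} [MeasurableSpace Ω] (μ : Measure Ω) [IsProbabilityMeasure μ]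
    {M K : ℕ} (W : Matrix (Fin M) (Fin K) ℝ)
    (x₀ : Ω → Fin K → ℝ) (n : Ω → Fin M → ℝ)
    (σx2 σn2 : ℝ)
    (hx_meas : Measurable x₀) (hn_meas : Measurable n)
    -- entries of x₀ are i.i.d. with mean 0 and variance σx2
    (hx_indep : iIndepFun (fun i ω => x₀ ω i) μ)
    (hx_ident : ∀ i j : Fin K, IdentDistrib (fun ω => x₀ ω i) (fun ω => x₀ ω j) μ μ)
    (hx_L2 : ∀ i : Fin K, MemLp (fun ω => x₀ ω i) 2 μ)
    (hx_mean : ∀ i : Fin K, ∫ ω, x₀ ω i ∂μ = 0)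
    (hx_var : ∀ i : Fin K, ∫ ω, (x₀ ω i) ^ 2 ∂μ = σx2)
    -- entries of n are i.i.d. with mean 0 and variance σn2
    (hn_indep : iIndepFun (fun i ω => n ω i) μ)
    (hn_ident : ∀ i j : Fin M, IdentDistrib (fun ω => n ω i) (fun ω => n ω j) μ μ)
    (hn_L2 : ∀ i : Fin M, MemLp (fun ω => n ω i) 2 μ)
    (hn_mean : ∀ i : Fin M, ∫ ω, n ω i ∂μ = 0)
    (hn_var : ∀ i : Fin M, ∫ ω, (n ω i) ^ 2 ∂μ = σn2)
    -- x₀ and n are independent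
    (hxn : IndepFun x₀ n μ)
    (lam : ℝ) (hlam : 0 < lam)
    (y : Ω → Fin M → ℝ) (hy : y = fun ω => W.mulVec (x₀ ω) + n ω)
    (xhat : Ω → Fin K → ℝ)
    (hxhat : xhat = fun ω =>
      ((Wᵀ * W + lam • (1 : Matrix (Fin K) (Fin K) ℝ))⁻¹ * Wᵀ).mulVec (y ω)) :
    ∃ a b : ℝ,
      a = lam * (W * Wᵀ * (W * Wᵀ + lam • (1 : Matrix (Fin M) (Fin M) ℝ))⁻¹).trace ∧
      b = lam * ((W * Wᵀ + lam • (1 : Matrix (Fin M) (Fin M) ℝ))⁻¹).trace ∧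
      ∫ ω, ((y ω - W.mulVec (xhat ω)) ⬝ᵥ (y ω - W.mulVec (xhat ω))
          + lam * (xhat ω ⬝ᵥ xhat ω)) ∂μ = a * σx2 + b * σn2 :=
  stmt_6_general μ W x₀ n σx2 σn2 hx_indep hx_L2 hx_mean hx_var hn_indep hn_L2 hn_mean hn_var hxn
    lam hlam y hy xhat hxhat
end

section
/- Let Q be an M×M positive semidefinite real matrix with Tr(Q) > 0, let K ≥ 1, and let t > 0. Then the fixed-point equation δ = (1/K) Tr(Q (I_M + (t/(1+tδ)) Q)^{-1}) has a unique solution δ > 0. -/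
open Matrix

theorem trace_aux {M : ℕ} (Q : Matrix (Fin M) (Fin M) ℝ) (hQ : Q.PosSemidef) (c : ℝ) (hc : 0 ≤ c) :
    (Q * ((1 : Matrix (Fin M) (Fin M) ℝ) + c • Q)⁻¹).trace
      = ∑ i, hQ.1.eigenvalues i / (1 + c * hQ.1.eigenvalues i) := by
  classical
  set μ := hQ.1.eigenvalues with hμ
  set U : Matrix (Fin M) (Fin M) ℝ := (hQ.1.eigenvectorUnitary : Matrix (Fin M) (Fin M) ℝ) with hU
  have hspec : Q = U * diagonal (RCLike.ofReal ∘ μ) * star U := hQ.1.spectral_theorem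
  have hcoe : (RCLike.ofReal ∘ μ : Fin M → ℝ) = μ := by
    funext i; simp [RCLike.ofReal]
  rw [hcoe] at hspec
  have hUU : U * star U = 1 := Matrix.mem_unitaryGroup_iff.mp hQ.1.eigenvectorUnitary.2
  have hU'U : star U * U = 1 := Matrix.mem_unitaryGroup_iff'.mp hQ.1.eigenvectorUnitary.2
  have hpos : ∀ i, 0 < 1 + c * μ i := fun i => by
    have := hQ.eigenvalues_nonneg i
    nlinarith
  set A : Matrix (Fin M) (Fin M) ℝ := diagonal (fun i => 1 + c * μ i) with hA
  set B : Matrix (Fin M) (Fin M) ℝ := diagonal (fun i => (1 + c * μ i)⁻¹) with hB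
  have hAB : A * B = 1 := by
    have h1 : (fun i => (1 + c * μ i) * (1 + c * μ i)⁻¹) = fun _ : Fin M => (1 : ℝ) := by
      funext i; exact mul_inv_cancel₀ (hpos i).ne'
    rw [hA, hB, diagonal_mul_diagonal, h1, diagonal_one]
  have hdec : (1 : Matrix (Fin M) (Fin M) ℝ) + c • Q = U * A * star U := by
    rw [hspec, hA]
    have h2 : diagonal (fun i => 1 + c * μ i) = 1 + c • diagonal μ := by
      rw [← diagonal_one, ← diagonal_smul, diagonal_add]
      congr 1
    rw [h2, Matrix.mul_add, Matrix.add_mul, Matrix.mul_one, hUU, Matrix.mul_smul,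
      Matrix.smul_mul]
  have hinv : ((1 : Matrix (Fin M) (Fin M) ℝ) + c • Q)⁻¹ = U * B * star U := by
    rw [hdec]
    apply Matrix.inv_eq_right_inv
    calc U * A * star U * (U * B * star U) = U * (A * B) * star U := by
          rw [show U * A * star U * (U * B * star U) = U * A * (star U * U) * (B * star U) by
            noncomm_ring, hU'U, Matrix.mul_one]
          noncomm_ring
      _ = 1 := by rw [hAB, Matrix.mul_one, hUU]
  rw [hinv, hspec]
  have h3 : U * diagonal μ * star U * (U * B * star U) = U * (diagonal μ * B) * star U := by
    rw [show U * diagonal μ * star U * (U * B * star U)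
        = U * diagonal μ * (star U * U) * (B * star U) by noncomm_ring, hU'U, Matrix.mul_one]
    noncomm_ring
  rw [h3, Matrix.trace_mul_cycle, ← Matrix.mul_assoc, hU'U, Matrix.one_mul, hB,
    diagonal_mul_diagonal, trace_diagonal]
  exact Finset.sum_congr rfl fun i _ => (div_eq_mul_inv _ _).symm

theorem scalar_aux {M : ℕ} (μ : Fin M → ℝ) (hμ : ∀ i, 0 ≤ μ i) (i0 : Fin M) (hi0 : 0 < μ i0)
    (K : ℕ) (hK : 1 ≤ K) (t : ℝ) (ht : 0 < t) :
    ∃! δ : ℝ, 0 < δ ∧ δ = (1 / (K : ℝ)) * ∑ i, μ i / (1 + (t / (1 + t * δ)) * μ i) := by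
  classical
  have hK' : (0 : ℝ) < K := by exact_mod_cast Nat.lt_of_lt_of_le Nat.zero_lt_one hK
  set F : ℝ → ℝ := fun δ => (1 / (K : ℝ)) * ∑ i, μ i / (1 + (t / (1 + t * δ)) * μ i) with hF
  have hden : ∀ δ : ℝ, 0 ≤ δ → 0 < 1 + t * δ := fun δ hδ => by nlinarith
  have hcnn : ∀ δ : ℝ, 0 ≤ δ → 0 ≤ t / (1 + t * δ) :=
    fun δ hδ => div_nonneg ht.le (hden δ hδ).le
  have hden2 : ∀ δ : ℝ, 0 ≤ δ → ∀ i, 0 < 1 + (t / (1 + t * δ)) * μ i := fun δ hδ i => by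
    have := mul_nonneg (hcnn δ hδ) (hμ i); linarith
  have hid : ∀ δ : ℝ, 0 ≤ δ → ∀ i,
      μ i / (1 + (t / (1 + t * δ)) * μ i) = μ i * (1 + t * δ) / (1 + t * δ + t * μ i) := by
    intro δ hδ i
    have h1 := hden δ hδ
    have h2 : (0:ℝ) < 1 + t * δ + t * μ i := by nlinarith [mul_nonneg ht.le (hμ i)]
    field_simp
  set S := ∑ i, μ i with hS
  have hFle : ∀ δ : ℝ, 0 ≤ δ → F δ ≤ (1 / (K:ℝ)) * S := by
    intro δ hδ
    apply mul_le_mul_of_nonneg_left _ (by positivity)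
    apply Finset.sum_le_sum
    intro i _
    have hd1 : 1 ≤ 1 + (t / (1 + t * δ)) * μ i := by
      have := mul_nonneg (hcnn δ hδ) (hμ i); linarith
    exact div_le_self (hμ i) hd1
  -- uniqueness core
  have huniq : ∀ a b : ℝ, 0 < a → a = F a → 0 < b → b = F b → a = b := by
    have key : ∀ a b : ℝ, 0 < a → a = F a → 0 < b → b = F b → a < b → False := by
      intro a b ha haF hb hbF hab
      have cancel : ∀ x y : ℝ, x = (1/(K:ℝ)) * y → (K:ℝ) * x = y := by
        intro x y hxy; rw [hxy]; field_simp
      have ha' : (K:ℝ) * a = ∑ i, μ i * (1 + t * a) / (1 + t * a + t * μ i) := by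
        apply cancel
        conv_lhs => rw [haF]
        simp only [hF]
        exact congrArg _ (Finset.sum_congr rfl fun i _ => hid a ha.le i)
      have hb' : (K:ℝ) * b = ∑ i, μ i * (1 + t * b) / (1 + t * b + t * μ i) := by
        apply cancel
        conv_lhs => rw [hbF]
        simp only [hF]
        exact congrArg _ (Finset.sum_congr rfl fun i _ => hid b hb.le i)
      have hsum : ∑ i, μ i * (1 + t * b) / (1 + t * b + t * μ i) * a
          < ∑ i, μ i * (1 + t * a) / (1 + t * a + t * μ i) * b := by
        apply Finset.sum_lt_sum
        · intro i _
          have hda : (0:ℝ) < 1 + t * a + t * μ i := by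
            nlinarith [mul_nonneg ht.le (hμ i)]
          have hdb : (0:ℝ) < 1 + t * b + t * μ i := by
            nlinarith [mul_nonneg ht.le (hμ i)]
          rw [div_mul_eq_mul_div, div_mul_eq_mul_div, div_le_div_iff₀ hdb hda]
          have h1 : 0 ≤ μ i * (b - a) := mul_nonneg (hμ i) (sub_nonneg.mpr hab.le)
          nlinarith [mul_nonneg h1 (mul_pos (hden a ha.le) (hden b hb.le)).le,
            mul_nonneg (mul_nonneg ht.le (hμ i)) h1]
        · refine ⟨i0, Finset.mem_univ _, ?_⟩
          have hda : (0:ℝ) < 1 + t * a + t * μ i0 := by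
            nlinarith [mul_nonneg ht.le (hμ i0)]
          have hdb : (0:ℝ) < 1 + t * b + t * μ i0 := by
            nlinarith [mul_nonneg ht.le (hμ i0)]
          rw [div_mul_eq_mul_div, div_mul_eq_mul_div, div_lt_div_iff₀ hdb hda]
          have h1 : 0 < μ i0 * (b - a) := mul_pos hi0 (sub_pos.mpr hab)
          nlinarith [mul_pos h1 (mul_pos (hden a ha.le) (hden b hb.le)),
            mul_nonneg (mul_nonneg ht.le (hμ i0)) h1.le]
      rw [← Finset.sum_mul, ← Finset.sum_mul, ← ha', ← hb'] at hsum
      nlinarith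
    intro a b ha haF hb hbF
    rcases lt_trichotomy a b with h | h | h
    · exact absurd (key a b ha haF hb hbF h) (fun h => h)
    · exact h
    · exact absurd (key b a hb hbF ha haF h) (fun h => h)
  -- existence
  set B : ℝ := (1 / (K:ℝ)) * S + 1 with hB
  have hSn : 0 ≤ S := Finset.sum_nonneg fun i _ => hμ i
  have hB0 : (0:ℝ) ≤ B := by positivity
  set g : ℝ → ℝ := fun δ => δ - F δ with hg
  have hgcont : ContinuousOn g (Set.Icc 0 B) := by
    apply ContinuousOn.sub continuousOn_id
    apply ContinuousOn.mul continuousOn_const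
    apply continuousOn_finset_sum
    intro i _
    apply ContinuousOn.div continuousOn_const
    · apply ContinuousOn.add continuousOn_const
      apply ContinuousOn.mul _ continuousOn_const
      apply ContinuousOn.div continuousOn_const
      · exact continuousOn_const.add (continuousOn_const.mul continuousOn_id)
      · intro x hx; exact (hden x hx.1).ne'
    · intro x hx; exact (hden2 x hx.1 i).ne'
  have hg0 : g 0 < 0 := by
    have hF0 : 0 < F 0 := by
      apply mul_pos (by positivity)
      apply Finset.sum_pos' (fun i _ => div_nonneg (hμ i) (hden2 0 le_rfl i).le)
      exact ⟨i0, Finset.mem_univ _, div_pos hi0 (hden2 0 le_rfl i0)⟩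
    simp only [hg, zero_sub, neg_neg, neg_lt_zero]
    linarith
  have hgB : 0 ≤ g B := by
    have := hFle B hB0
    simp only [hg]
    rw [hB] at *
    linarith
  obtain ⟨δ, hδmem, hgδ⟩ := intermediate_value_Icc hB0 hgcont ⟨hg0.le, hgB⟩
  have hδF : δ = F δ := by
    have : δ - F δ = 0 := hgδ
    linarith
  have hδpos : 0 < δ := by
    rcases eq_or_lt_of_le hδmem.1 with h | h
    · exfalso; rw [← h] at hgδ; rw [hgδ] at hg0; exact lt_irrefl _ hg0
    · exact h
  exact ⟨δ, ⟨hδpos, hδF⟩, fun y hy => huniq y δ hy.1 hy.2 hδpos hδF⟩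

theorem stmt_9 {M : ℕ} (Q : Matrix (Fin M) (Fin M) ℝ) (hQ : Q.PosSemidef)
    (hQtr : 0 < Q.trace) (K : ℕ) (hK : 1 ≤ K) (t : ℝ) (ht : 0 < t) :
    ∃! δ : ℝ, 0 < δ ∧
      δ = (1 / (K : ℝ)) *
        (Q * ((1 : Matrix (Fin M) (Fin M) ℝ) + (t / (1 + t * δ)) • Q)⁻¹).trace := by
  classical
  set μ := hQ.1.eigenvalues with hμdef
  have hμ0 : ∀ i, 0 ≤ μ i := hQ.eigenvalues_nonneg
  have htr : Q.trace = ∑ i, μ i := by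
    have h := trace_aux Q hQ 0 le_rfl
    simpa using h
  obtain ⟨i0, hi0⟩ : ∃ i, 0 < μ i := by
    by_contra h
    push_neg at h
    have : (∑ i, μ i) ≤ 0 := Finset.sum_nonpos fun i _ => h i
    rw [htr] at hQtr
    linarith
  have hden : ∀ δ : ℝ, 0 ≤ δ → 0 < 1 + t * δ := fun δ hδ => by nlinarith
  have hcnn : ∀ δ : ℝ, 0 ≤ δ → 0 ≤ t / (1 + t * δ) :=
    fun δ hδ => div_nonneg ht.le (hden δ hδ).le
  have hEq : ∀ δ : ℝ, 0 ≤ δ →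
      (Q * ((1 : Matrix (Fin M) (Fin M) ℝ) + (t / (1 + t * δ)) • Q)⁻¹).trace
        = ∑ i, μ i / (1 + (t / (1 + t * δ)) * μ i) :=
    fun δ hδ => trace_aux Q hQ _ (hcnn δ hδ)
  obtain ⟨δ, ⟨hδpos, hδeq⟩, huniq⟩ := scalar_aux μ hμ0 i0 hi0 K hK t ht
  refine ⟨δ, ⟨hδpos, ?_⟩, ?_⟩
  · rw [hEq δ hδpos.le]; exact hδeq
  · intro y hy
    apply huniq
    refine ⟨hy.1, ?_⟩
    rw [← hEq y hy.1.le]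
    exact hy.2
end
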